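/- arXiv:math/0104160 — 4 statements merged into one kernel-verified Lean document; each statement's English description precedes it below -/
import Mathlib

section
/- Let k ≥ 2 be an integer and let C be an extremal Type II code of length 24 over ℤ/2kℤ. Let L_C = {x ∈ ℤ^24 : (x_1 mod 2k, …, x_24 mod 2k) ∈ C}, equipped with the ℚ-valued bilinear form B(x,y) = (Σ_{i=1}^{24} x_i y_i)/(2k). Then B takes integer values on L_C × L_C, (L_C, B) is a positive-definite even unimodular lattice of rank 24 with no roots, and the vectors x_i = 2k·e_i (where e_1, …, e_24 is the standard basis of ℤ^24) form a 2k-frame of L_C whose associated code equals C. -/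
open scoped BigOperators

/-- The Euclidean weight of a word over `ZMod (2*k)`. -/
def euclideanWeight (k n : ℕ) (c : Fin n → ZMod (2 * k)) : ℤ :=
  ∑ i, if ((c i).val : ℤ) ≤ (k : ℤ) then ((c i).val : ℤ) ^ 2
       else (((c i).val : ℤ) - 2 * k) ^ 2

/-- The dual of a set of words with respect to the bilinear form `⟨x,y⟩ = ∑ᵢ xᵢ yᵢ`. -/
def dualCode (k n : ℕ) (C : Set (Fin n → ZMod (2 * k))) : Set (Fin n → ZMod (2 * k)) :=
  {x | ∀ c ∈ C, ∑ i, x i * c i = 0}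

/-- The `ℤ`-valued bilinear form `B(x,y) = (∑ᵢ xᵢ yᵢ)/(2k)` (integer division, which is exact
on the lattice `L_C`). -/
def latticeForm (k : ℕ) (x y : Fin 24 → ℤ) : ℤ :=
  (∑ i, x i * y i) / (2 * (k : ℤ))

private def mrep (k : ℕ) (a : ℤ) : ℤ :=
  if (((a : ZMod (2*k)).val : ℤ)) ≤ (k : ℤ) then ((a : ZMod (2*k)).val : ℤ)
  else ((a : ZMod (2*k)).val : ℤ) - 2*k

private lemma castval (k : ℕ) [NeZero (2*k)] (c : ZMod (2*k)) : ((c.val : ℤ) : ZMod (2*k)) = c := by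
  push_cast
  simp [ZMod.natCast_val, ZMod.cast_id]

private lemma mrep_dvd (k : ℕ) [NeZero (2*k)] (a : ℤ) : (2*(k:ℤ)) ∣ a - mrep k a := by
  have h : (2*(k:ℤ)) ∣ a - ((a : ZMod (2*k)).val : ℤ) := by
    have : ((a - ((a : ZMod (2*k)).val : ℤ) : ℤ) : ZMod (2*k)) = 0 := by
      push_cast
      simp [castval k ((a : ZMod (2*k)))]
    rw [ZMod.intCast_zmod_eq_zero_iff_dvd] at this
    exact_mod_cast this
  obtain ⟨t, ht⟩ := h
  unfold mrep
  split_ifs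
  · exact ⟨t, ht⟩
  · exact ⟨t + 1, by linarith⟩

private lemma mrep_bound (k : ℕ) [NeZero (2*k)] (hk : 1 ≤ k) (a : ℤ) :
    -(k:ℤ) ≤ mrep k a ∧ mrep k a ≤ (k:ℤ) := by
  have h1 : ((a : ZMod (2*k)).val : ℤ) < 2*(k:ℤ) := by
    have := ZMod.val_lt (a : ZMod (2*k))
    exact_mod_cast this
  have h0 : (0:ℤ) ≤ ((a : ZMod (2*k)).val : ℤ) := Int.natCast_nonneg _
  unfold mrep
  split_ifs with h <;> constructor <;> omega

private lemma mrep_sq_le (k : ℕ) [NeZero (2*k)] (hk : 1 ≤ k) (a : ℤ) :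
    mrep k a ^ 2 ≤ a ^ 2 := by
  obtain ⟨t, ht⟩ := mrep_dvd k a
  obtain ⟨hb1, hb2⟩ := mrep_bound k hk a
  set m := mrep k a with hm
  have ha : a = m + 2*(k:ℤ)*t := by linarith
  have h1 : t ≤ t^2 := Int.le_self_sq t
  have h2 : -t ≤ t^2 := by nlinarith [Int.le_self_sq (-t)]
  have hknn : (0:ℤ) ≤ k := Int.natCast_nonneg _
  have key : 0 ≤ (k:ℤ)*t^2 + m * t := by nlinarith
  have key2 : 0 ≤ (k:ℤ) * ((k:ℤ)*t^2 + m * t) := mul_nonneg hknn key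
  rw [ha]; nlinarith [key2]

private lemma mrep_sq_dvd (k : ℕ) [NeZero (2*k)] (a : ℤ) :
    (4*(k:ℤ)) ∣ a ^ 2 - mrep k a ^ 2 := by
  obtain ⟨t, ht⟩ := mrep_dvd k a
  exact ⟨t * (mrep k a + (k:ℤ)*t), by linear_combination (a + mrep k a + 2*(k:ℤ)*t) * ht⟩

/-- Construction A: let `k ≥ 2` and let `C` be an extremal Type II code of length 24 over
`ℤ/2kℤ`.  Then `L_C = {x ∈ ℤ²⁴ : x mod 2k ∈ C}`, with the form `B(x,y) = (∑ xᵢyᵢ)/(2k)`,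
is a positive-definite even unimodular lattice of rank 24 without roots (the form being
integer-valued on `L_C`), and the vectors `xᵢ = 2k·eᵢ` form a `2k`-frame of `L_C` whose
associated code is `C`. -/
theorem constructionA_extremal_typeII (k : ℕ) (hk : 2 ≤ k)
    (C : Submodule (ZMod (2 * k)) (Fin 24 → ZMod (2 * k)))
    (hself : (C : Set (Fin 24 → ZMod (2 * k))) = dualCode k 24 (C : Set (Fin 24 → ZMod (2 * k))))
    (hdoubly : ∀ c ∈ C, (4 * (k : ℤ)) ∣ euclideanWeight k 24 c)
    (hextremal : IsLeast {w : ℤ | ∃ c ∈ C, c ≠ 0 ∧ euclideanWeight k 24 c = w} (8 * (k : ℤ)))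
    (LC : Submodule ℤ (Fin 24 → ℤ))
    (hLC : (LC : Set (Fin 24 → ℤ)) = {x | (fun i => ((x i : ℤ) : ZMod (2 * k))) ∈ C})
    (xv : Fin 24 → (Fin 24 → ℤ))
    (hxv : ∀ i j, xv i j = if j = i then (2 * (k : ℤ)) else 0) :
    -- `B` takes integer values on `L_C × L_C`
    (∀ x ∈ LC, ∀ y ∈ LC, (2 * (k : ℤ)) ∣ ∑ i, x i * y i) ∧
    -- the form is positive definite on `L_C`
    (∀ x ∈ LC, x ≠ 0 → 0 < latticeForm k x x) ∧
    -- the lattice is even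
    (∀ x ∈ LC, Even (latticeForm k x x)) ∧
    -- free of rank 24
    Module.Free ℤ LC ∧ Module.finrank ℤ LC = 24 ∧
    -- unimodular: every `ℤ`-linear functional on `L_C` is represented by a unique element
    (∀ f : LC →ₗ[ℤ] ℤ, ∃! x : LC, ∀ y : LC, f y = latticeForm k (x : Fin 24 → ℤ) (y : Fin 24 → ℤ)) ∧
    -- no roots
    (∀ x ∈ LC, latticeForm k x x ≠ 2) ∧
    -- `x₁, …, x₂₄` is a `2k`-frame of `L_C` …
    (∀ i, xv i ∈ LC) ∧
    (∀ i j, latticeForm k (xv i) (xv j) = if i = j then (2 * (k : ℤ)) else 0) ∧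
    -- … whose associated code equals `C`
    Set.range (fun l : LC => fun i => ((latticeForm k (l : Fin 24 → ℤ) (xv i) : ℤ) : ZMod (2 * k)))
      = (C : Set (Fin 24 → ZMod (2 * k))) := by
  haveI : NeZero (2 * k) := ⟨by omega⟩
  have hk0 : (0:ℤ) < 2 * (k:ℤ) := by positivity
  have hkne : (2 * (k:ℤ)) ≠ 0 := by positivity
  have hcastk : ((2*k : ℕ) : ℤ) = 2 * (k:ℤ) := by push_cast; ring
  -- membership criterion
  have mem_iff : ∀ x : Fin 24 → ℤ, x ∈ LC ↔ (fun i => ((x i : ℤ) : ZMod (2*k))) ∈ C := by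
    intro x
    rw [← SetLike.mem_coe, hLC]
    exact Iff.rfl
  -- integrality
  have hdvd : ∀ x ∈ LC, ∀ y ∈ LC, (2 * (k:ℤ)) ∣ ∑ i, x i * y i := by
    intro x hx y hy
    have hx' : (fun i => ((x i : ℤ) : ZMod (2*k))) ∈ dualCode k 24 (C : Set _) := by
      rw [← hself]
      exact (mem_iff x).1 hx
    have h0 : ∑ i, ((x i : ℤ) : ZMod (2*k)) * ((y i : ℤ) : ZMod (2*k)) = 0 :=
      hx' _ ((mem_iff y).1 hy)
    have : ((∑ i, x i * y i : ℤ) : ZMod (2*k)) = 0 := by push_cast; exact h0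
    rw [ZMod.intCast_zmod_eq_zero_iff_dvd, hcastk] at this
    exact this
  -- generic sums against xv
  have hsum_xv : ∀ (x : Fin 24 → ℤ) (j : Fin 24), ∑ i, x i * xv i j = x j * (2 * (k:ℤ)) := by
    intro x j
    have he : ∀ i, x i * xv i j = if j = i then x i * (2 * (k:ℤ)) else 0 := by
      intro i
      rw [hxv]
      split_ifs <;> ring
    rw [Finset.sum_congr rfl (fun i _ => he i), Finset.sum_ite_eq Finset.univ j]
    simp
  have lform_xv : ∀ (x : Fin 24 → ℤ) (j : Fin 24), latticeForm k x (xv j) = x j := by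
    intro x j
    have hs : ∑ i, x i * xv j i = x j * (2 * (k:ℤ)) := by
      have he : ∀ i, x i * xv j i = if i = j then x i * (2 * (k:ℤ)) else 0 := by
        intro i
        rw [hxv]
        split_ifs <;> ring
      rw [Finset.sum_congr rfl (fun i _ => he i), Finset.sum_ite_eq' Finset.univ j]
      simp
    unfold latticeForm
    rw [hs, Int.mul_ediv_cancel _ hkne]
  -- xv i ∈ LC
  have hmemxv : ∀ i, xv i ∈ LC := by
    intro i
    rw [mem_iff]
    have : (fun j => ((xv i j : ℤ) : ZMod (2*k))) = 0 := by
      funext j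
      rw [hxv]
      split_ifs
      · show ((2 * (k:ℤ) : ℤ) : ZMod (2*k)) = 0
        rw [← hcastk]
        exact_mod_cast ZMod.natCast_self (2*k)
      · simp
    rw [this]
    exact C.zero_mem
  -- Euclidean weight of reduction
  have hEwt : ∀ x : Fin 24 → ℤ,
      euclideanWeight k 24 (fun i => ((x i : ℤ) : ZMod (2*k))) = ∑ i, mrep k (x i) ^ 2 := by
    intro x
    unfold euclideanWeight mrep
    apply Finset.sum_congr rfl
    intro i _
    split_ifs <;> ring
  -- 4k divides the sum of squares for x in LC
  have hfourk : ∀ x ∈ LC, (4 * (k:ℤ)) ∣ ∑ i, x i * x i := by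
    intro x hx
    have h1 : (4 * (k:ℤ)) ∣ ∑ i, (x i ^ 2 - mrep k (x i) ^ 2) :=
      Finset.dvd_sum (fun i _ => mrep_sq_dvd k (x i))
    have h2 := hdoubly _ ((mem_iff x).1 hx)
    rw [hEwt] at h2
    have h3 : ∑ i, x i * x i = (∑ i, (x i ^ 2 - mrep k (x i) ^ 2)) + ∑ i, mrep k (x i) ^ 2 := by
      rw [← Finset.sum_add_distrib]
      apply Finset.sum_congr rfl
      intro i _
      ring
    rw [h3]
    exact dvd_add h1 h2
  refine ⟨hdvd, ?_, ?_, inferInstance, ?_, ?_, ?_, hmemxv, ?_, ?_⟩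
  · -- positive definite
    intro x hx hxne
    obtain ⟨q, hq⟩ := hdvd x hx x hx
    have hlf : latticeForm k x x = q := by
      unfold latticeForm
      rw [hq, Int.mul_ediv_cancel_left _ hkne]
    have hS : 0 < ∑ i, x i * x i := by
      apply Finset.sum_pos' (fun i _ => mul_self_nonneg _)
      obtain ⟨i, hi⟩ : ∃ i, x i ≠ 0 := by
        by_contra h
        push_neg at h
        exact hxne (funext h)
      exact ⟨i, Finset.mem_univ i, mul_self_pos.mpr hi⟩
    rw [hlf]
    nlinarith [hq, hS, hk0]
  · -- even
    intro x hx
    obtain ⟨s, hs⟩ := hfourk x hx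
    obtain ⟨q, hq⟩ := hdvd x hx x hx
    have hlf : latticeForm k x x = q := by
      unfold latticeForm
      rw [hq, Int.mul_ediv_cancel_left _ hkne]
    refine ⟨s, ?_⟩
    rw [hlf]
    have : 2 * (k:ℤ) * q = 2 * (k:ℤ) * (s + s) := by rw [← hq, hs]; ring
    exact mul_left_cancel₀ hkne this
  · -- rank
    have hle : Module.finrank ℤ LC ≤ 24 := by
      have := Submodule.finrank_le LC
      simpa using this
    have hge : 24 ≤ Module.finrank ℤ LC := by
      have hli : LinearIndependent ℤ (fun i : Fin 24 => (⟨xv i, hmemxv i⟩ : LC)) := by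
        have hli' : LinearIndependent ℤ xv := by
          rw [Fintype.linearIndependent_iff]
          intro g hg j
          have hgj := congrFun hg j
          simp only [Finset.sum_apply, Pi.smul_apply, smul_eq_mul, Pi.zero_apply] at hgj
          rw [hsum_xv g j] at hgj
          exact (mul_eq_zero.1 hgj).resolve_right hkne
        have hcomp : xv = (LC.subtype) ∘ (fun i : Fin 24 => (⟨xv i, hmemxv i⟩ : LC)) := rfl
        exact LinearIndependent.of_comp LC.subtype (hcomp ▸ hli')
      have := hli.fintype_card_le_finrank
      simpa using this
    omega
  · -- unimodular
    intro f
    set a : Fin 24 → ℤ := fun i => f ⟨xv i, hmemxv i⟩ with ha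
    have key : ∀ (y : Fin 24 → ℤ) (hy : y ∈ LC), ∑ i, a i * y i = 2 * (k:ℤ) * f ⟨y, hy⟩ := by
      intro y hy
      have hdec : (2 * (k:ℤ)) • (⟨y, hy⟩ : LC) = ∑ i, y i • (⟨xv i, hmemxv i⟩ : LC) := by
        apply Subtype.ext
        simp only [SetLike.val_smul, AddSubmonoidClass.coe_finset_sum]
        funext j
        simp only [Pi.smul_apply, smul_eq_mul, Finset.sum_apply]
        rw [hsum_xv y j]
        ring
      have h2 : (2 * (k:ℤ)) * f ⟨y, hy⟩ = ∑ i, y i * a i := by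
        have hc := congrArg f hdec
        rw [map_smul, map_sum] at hc
        simp only [map_smul, smul_eq_mul] at hc
        exact hc
      rw [h2]
      exact Finset.sum_congr rfl (fun i _ => mul_comm _ _)
    have haLC : a ∈ LC := by
      rw [mem_iff]
      have hmem : (fun i => ((a i : ℤ) : ZMod (2*k))) ∈ (C : Set (Fin 24 → ZMod (2*k))) := by
        rw [hself]
        intro c hc
        set y : Fin 24 → ℤ := fun i => ((c i).val : ℤ) with hy
        have hyc : (fun i => ((y i : ℤ) : ZMod (2*k))) = c := by
          funext i
          exact castval k (c i)
        have hyLC : y ∈ LC := by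
          rw [mem_iff, hyc]
          exact hc
        have hkey := key y hyLC
        have h0 : ((∑ i, a i * y i : ℤ) : ZMod (2*k)) = 0 := by
          rw [hkey]
          have hsplit : ((2 * (k:ℤ) * f ⟨y, hyLC⟩ : ℤ) : ZMod (2*k))
              = ((2*k : ℕ) : ZMod (2*k)) * ((f ⟨y, hyLC⟩ : ℤ) : ZMod (2*k)) := by
            push_cast; ring
          rw [hsplit, ZMod.natCast_self, zero_mul]
        rw [← hyc]
        push_cast at h0
        exact h0
      exact hmem
    refine ⟨⟨a, haLC⟩, ?_, ?_⟩
    · intro y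
      have hkey := key y.1 y.2
      show f y = latticeForm k a (y : Fin 24 → ℤ)
      unfold latticeForm
      rw [hkey, Int.mul_ediv_cancel_left _ hkne]
    · intro x' hx'
      apply Subtype.ext
      funext j
      have h1 := hx' ⟨xv j, hmemxv j⟩
      rw [lform_xv] at h1
      exact h1.symm
  · -- no roots
    intro x hx hroot
    obtain ⟨q, hq⟩ := hdvd x hx x hx
    have hlf : latticeForm k x x = q := by
      unfold latticeForm
      rw [hq, Int.mul_ediv_cancel_left _ hkne]
    rw [hlf] at hroot
    have hsum : ∑ i, x i * x i = 4 * (k:ℤ) := by rw [hq, hroot]; ring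
    by_cases hz : (fun i => ((x i : ℤ) : ZMod (2*k))) = 0
    · have hdvd2 : (4 * (k:ℤ) * (k:ℤ)) ∣ ∑ i, x i * x i := by
        apply Finset.dvd_sum
        intro i _
        have hxi : (2 * (k:ℤ)) ∣ x i := by
          have hzi := congrFun hz i
          simp only [Pi.zero_apply] at hzi
          rw [ZMod.intCast_zmod_eq_zero_iff_dvd, hcastk] at hzi
          exact hzi
        have h2 := mul_dvd_mul hxi hxi
        exact dvd_trans ⟨1, by ring⟩ h2
      rw [hsum] at hdvd2
      have hpos : (0:ℤ) < 4 * (k:ℤ) := by positivity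
      have := Int.le_of_dvd hpos hdvd2
      nlinarith
    · have hmem : euclideanWeight k 24 (fun i => ((x i : ℤ) : ZMod (2*k))) ∈
          {w : ℤ | ∃ c ∈ C, c ≠ 0 ∧ euclideanWeight k 24 c = w} :=
        ⟨_, (mem_iff x).1 hx, hz, rfl⟩
      have hge := hextremal.2 hmem
      rw [hEwt] at hge
      have hle : ∑ i, mrep k (x i) ^ 2 ≤ ∑ i, x i * x i := by
        apply Finset.sum_le_sum
        intro i _
        have := mrep_sq_le k (by omega) (x i)
        nlinarith [this]
      rw [hsum] at hle
      have : (8:ℤ) * k ≤ 4 * k := le_trans hge hle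
      nlinarith
  · -- frame gram matrix
    intro i j
    rw [lform_xv, hxv]
    by_cases h : i = j
    · simp [h]
    · simp [h, Ne.symm h]
  · -- associated code
    ext c
    constructor
    · rintro ⟨l, rfl⟩
      show (fun i => ((latticeForm k (l : Fin 24 → ℤ) (xv i) : ℤ) : ZMod (2*k)))
          ∈ (C : Set (Fin 24 → ZMod (2*k)))
      have heq : (fun i => ((latticeForm k (l : Fin 24 → ℤ) (xv i) : ℤ) : ZMod (2*k)))
          = fun i => (((l : Fin 24 → ℤ) i : ℤ) : ZMod (2*k)) := by
        funext i
        rw [lform_xv]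
      rw [heq]
      exact (mem_iff _).1 l.2
    · intro hc
      set y : Fin 24 → ℤ := fun i => ((c i).val : ℤ) with hy
      have hyc : (fun i => ((y i : ℤ) : ZMod (2*k))) = c := by
        funext i
        exact castval k (c i)
      have hyLC : y ∈ LC := by
        rw [mem_iff, hyc]
        exact hc
      refine ⟨⟨y, hyLC⟩, ?_⟩
      show (fun i => ((latticeForm k y (xv i) : ℤ) : ZMod (2*k))) = c
      funext i
      rw [lform_xv]
      exact castval k (c i)
end

section
/- Let k be a positive integer, let Λ be a positive-definite even unimodular lattice of rank 24 without roots, let S = (x_1, …, x_24) be a 2k-frame of Λ, and let C_2 ⊆ 𝔽_2^24 be the binary code C_2 = {(d_1 mod 2, …, d_24 mod 2) : d ∈ ℤ^24 and (1/2)·Σ_i d_i x_i ∈ Λ}. Then dim_{𝔽_2} C_2 ≥ 12. -/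
open scoped BigOperators

/-- Let `k` be a positive integer, `Λ` a positive-definite even unimodular lattice of
rank 24 without roots, and `x₁, …, x₂₄` a `2k`-frame of `Λ`.  Let `C₂ ⊆ 𝔽₂²⁴` be the
binary code `{(d₁ mod 2, …, d₂₄ mod 2) : d ∈ ℤ²⁴, (1/2)·∑ᵢ dᵢ xᵢ ∈ Λ}`.
Then `dim_{𝔽₂} C₂ ≥ 12`. -/
theorem frame_binary_code_dim_ge_twelve (k : ℕ) (hk : 0 < k)
    (Λ : Type) [AddCommGroup Λ] [Module ℤ Λ]
    (hfree : Module.Free ℤ Λ) (hrank : Module.finrank ℤ Λ = 24)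
    (B : Λ →ₗ[ℤ] Λ →ₗ[ℤ] ℤ)
    (hsymm : ∀ a b : Λ, B a b = B b a)
    (hpos : ∀ a : Λ, a ≠ 0 → 0 < B a a)
    (heven : ∀ a : Λ, Even (B a a))
    (hunimod : Function.Bijective fun a : Λ => B a)
    (hnoroots : ∀ a : Λ, B a a ≠ 2)
    (x : Fin 24 → Λ)
    (hframe : ∀ i j, B (x i) (x j) = if i = j then (2 * (k : ℤ)) else 0)
    (C2 : Submodule (ZMod 2) (Fin 24 → ZMod 2))
    (hC2 : (C2 : Set (Fin 24 → ZMod 2)) =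
      {a | ∃ d : Fin 24 → ℤ, (∀ i, ((d i : ZMod 2)) = a i) ∧
            ∃ l : Λ, (2 : ℤ) • l = ∑ i, d i • x i}) :
    12 ≤ Module.finrank (ZMod 2) C2 := by
  classical
  haveI : Fact (Nat.Prime 2) := ⟨Nat.prime_two⟩
  -- Λ is a finite ℤ-module
  haveI hfinite : Module.Finite ℤ Λ := by
    obtain ⟨⟨ι, b⟩⟩ := hfree.exists_basis
    haveI : Finite ι := by
      by_contra h
      rw [not_finite_iff_infinite] at h
      have hr : Module.rank ℤ Λ = Cardinal.mk ι := b.mk_eq_rank''.symm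
      have : Module.finrank ℤ Λ = 0 := by
        rw [Module.finrank, hr, Cardinal.toNat_apply_of_aleph0_le (Cardinal.aleph0_le_mk ι)]
      omega
    exact Module.Finite.of_basis b
  have hk2 : (2 * (k:ℤ)) ≠ 0 := by
    have : (0:ℤ) < (k:ℤ) := by exact_mod_cast hk
    positivity
  -- injectivity of pairing against the frame
  have hphiinj : ∀ w : Λ, (∀ j, B (x j) w = 0) → w = 0 := by
    intro w hw
    by_contra hw0
    set v : Fin 25 → Λ := Fin.snoc x w with hv
    have hli : LinearIndependent ℤ v := by
      rw [Fintype.linearIndependent_iff]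
      intro g hg
      rw [Fin.sum_univ_castSucc] at hg
      simp only [hv, Fin.snoc_castSucc, Fin.snoc_last] at hg
      have hg24 : ∀ j : Fin 24, g j.castSucc = 0 := by
        intro j
        have h := congrArg (B (x j)) hg
        simp only [map_add, map_sum, map_smul, smul_eq_mul, map_zero, hframe, hw j,
          mul_zero, add_zero, mul_ite, Finset.sum_ite_eq, Finset.mem_univ, if_true] at h
        exact (mul_eq_zero.mp h).resolve_right hk2
      have hlast : g (Fin.last 24) = 0 := by
        have h2 := congrArg (B w) hg
        have hw' : ∀ i, B w (x i) = 0 := fun i => by rw [hsymm]; exact hw i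
        simp only [map_add, map_sum, map_smul, map_zsmul, smul_eq_mul, zsmul_eq_mul,
          Int.cast_id, map_zero, hw', mul_zero, Finset.sum_const_zero, zero_add] at h2
        have hBw := hpos w hw0
        rcases mul_eq_zero.mp h2 with h | h
        · exact h
        · exact absurd h hBw.ne'
      intro i
      rcases Fin.eq_castSucc_or_eq_last i with ⟨j, rfl⟩ | rfl
      · exact hg24 j
      · exact hlast
    have := hli.fintype_card_le_finrank
    rw [hrank] at this
    simp at this
  -- key identity: ∑ i, B (x i) l • x i = (2k) • l
  have hA2 : ∀ l : Λ, ∑ i, (B (x i) l) • x i = (2 * (k:ℤ)) • l := by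
    intro l
    have h0 : ∀ j, B (x j) ((∑ i, (B (x i) l) • x i) - (2 * (k:ℤ)) • l) = 0 := by
      intro j
      simp only [map_sub, map_sum, map_zsmul, zsmul_eq_mul, Int.cast_id, hframe, mul_ite,
        mul_zero, Finset.sum_ite_eq, Finset.mem_univ, if_true]
      rw [hsymm (x j) l]
      ring
    have h1 := hphiinj _ h0
    rwa [sub_eq_zero] at h1
  -- generators
  set H : Λ → (Fin 24 → ZMod 2) := fun l i => ((B (x i) l : ℤ) : ZMod 2) with hH
  have hHC2 : ∀ l, H l ∈ C2 := by
    intro l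
    have hmem : H l ∈ (C2 : Set (Fin 24 → ZMod 2)) := by
      rw [hC2]
      refine ⟨fun i => B (x i) l, fun i => rfl, (k:ℤ) • l, ?_⟩
      rw [← mul_zsmul l 2 (k:ℤ), hA2]
    exact hmem
  set D : Submodule (ZMod 2) (Fin 24 → ZMod 2) := Submodule.span (ZMod 2) (Set.range H)
    with hD
  have hDC2 : D ≤ C2 := by
    rw [hD, Submodule.span_le]
    rintro _ ⟨l, rfl⟩
    exact hHC2 l
  -- the standard bilinear form on 𝔽₂²⁴
  set F : (Fin 24 → ZMod 2) →ₗ[ZMod 2] (Fin 24 → ZMod 2) →ₗ[ZMod 2] ZMod 2 :=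
    LinearMap.mk₂ (ZMod 2) (fun v w => ∑ i, v i * w i)
      (by intro a b c; simp [add_mul, Finset.sum_add_distrib])
      (by intro r a b; simp [Finset.mul_sum, mul_assoc])
      (by intro a b c; simp [mul_add, Finset.sum_add_distrib])
      (by intro r a b; simp [Finset.mul_sum, mul_left_comm]) with hF
  set G : (Fin 24 → ZMod 2) →ₗ[ZMod 2] (D →ₗ[ZMod 2] ZMod 2) := F.compl₂ D.subtype with hG
  -- kernel of G is contained in C2
  have hker : LinearMap.ker G ≤ C2 := by
    intro v hv
    rw [LinearMap.mem_ker] at hv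
    have hpair : ∀ l : Λ, ∑ i, v i * ((B (x i) l : ℤ) : ZMod 2) = 0 := by
      intro l
      have h : G v ⟨H l, Submodule.subset_span ⟨l, rfl⟩⟩ = 0 := by rw [hv]; rfl
      simpa [hG, hF, hH] using h
    set ε : Fin 24 → ℤ := fun i => ((v i).val : ℤ) with he
    set y : Λ := ∑ i, ε i • x i with hy
    have hecast : ∀ i, ((ε i : ℤ) : ZMod 2) = v i := by
      intro i
      simp [he, ZMod.natCast_val, ZMod.cast_id]
    have hBy : ∀ l, B y l = ∑ i, ε i * B (x i) l := by
      intro l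
      rw [hsymm y l, hy, map_sum]
      refine Finset.sum_congr rfl fun i _ => ?_
      rw [map_zsmul, zsmul_eq_mul, Int.cast_id, hsymm l (x i)]
    have hdvd : ∀ l : Λ, (2:ℤ) ∣ B y l := by
      intro l
      have hz : ((B y l : ℤ) : ZMod 2) = 0 := by
        rw [hBy]
        push_cast
        rw [← hpair l]
        exact Finset.sum_congr rfl fun i _ => by rw [hecast]
      have := (ZMod.intCast_zmod_eq_zero_iff_dvd _ 2).mp hz
      exact_mod_cast this
    choose c hc using fun l => hdvd l
    have htwo : (2:ℤ) ≠ 0 := by norm_num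
    have hf : ∃ f : Λ →ₗ[ℤ] ℤ, ∀ l, f l = c l := by
      refine ⟨{ toFun := c, map_add' := ?_, map_smul' := ?_ }, fun l => rfl⟩
      · intro a b
        apply mul_left_cancel₀ htwo
        rw [← hc (a + b), map_add, hc a, hc b]; ring
      · intro r a
        apply mul_left_cancel₀ htwo
        simp only [smul_eq_mul, RingHom.id_apply]
        rw [← hc, LinearMap.map_smul, smul_eq_mul, hc a]; ring
    obtain ⟨f, hfc⟩ := hf
    obtain ⟨l0, hl0⟩ := hunimod.2 f
    have hl0' : B l0 = f := hl0
    have h2l : (2:ℤ) • l0 = y := by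
      apply hunimod.1
      show B ((2:ℤ) • l0) = B y
      ext l
      rw [hsymm ((2:ℤ) • l0) l, map_zsmul, zsmul_eq_mul, Int.cast_id, hsymm l l0, hl0',
        hfc l, ← hc l]
    rw [← SetLike.mem_coe, hC2]
    exact ⟨ε, hecast, l0, by rw [h2l, hy]⟩
  -- dimension count
  haveI : FiniteDimensional (ZMod 2) (Fin 24 → ZMod 2) := by infer_instance
  have hrn : Module.finrank (ZMod 2) (LinearMap.range G)
      + Module.finrank (ZMod 2) (LinearMap.ker G) = 24 := by
    rw [LinearMap.finrank_range_add_finrank_ker]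
    simp
  have h1 : Module.finrank (ZMod 2) (LinearMap.range G)
      ≤ Module.finrank (ZMod 2) C2 := by
    calc Module.finrank (ZMod 2) (LinearMap.range G)
        ≤ Module.finrank (ZMod 2) (Module.Dual (ZMod 2) D) := Submodule.finrank_le _
      _ = Module.finrank (ZMod 2) D := Subspace.dual_finrank_eq
      _ ≤ Module.finrank (ZMod 2) C2 := Submodule.finrank_mono hDC2
  have h2 : Module.finrank (ZMod 2) (LinearMap.ker G)
      ≤ Module.finrank (ZMod 2) C2 := Submodule.finrank_mono hker
  omega
end

section
/- Let k be an odd positive integer, let Λ be a positive-definite even unimodular lattice of rank 24 without roots, let S = (x_1, …, x_24) be a 2k-frame of Λ, and let C_2 ⊆ 𝔽_2^24 be the binary code C_2 = {(d_1 mod 2, …, d_24 mod 2) : d ∈ ℤ^24 and (1/2)·Σ_i d_i x_i ∈ Λ}. Then C_2 is a Type II binary code: C_2 is self-dual with respect to the standard bilinear form on 𝔽_2^24, and the Hamming weight of every codeword of C_2 is divisible by 4. -/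
/-!
Write a codeword as the reduction of `d` with `2λ = ∑ dᵢxᵢ`. For two such, `4⟨λ, μ⟩ = 2k ∑ dᵢeᵢ`;
as `k` is odd, `∑ dᵢeᵢ` is even, and since `⟨λ, λ⟩` is even, `4 ∣ ∑ dᵢ² ≡ wt (mod 4)`.
Conversely, an orthogonal frame of full rank satisfies `∑ ⟨l, xᵢ⟩ xᵢ = 2k l`, so `(⟨l, xᵢ⟩ mod 2)ᵢ`
is a codeword for every `l`. A word `y` orthogonal to all of them makes `⟨∑ yᵢxᵢ, ·⟩` even-valued,
and by unimodularity `∑ yᵢxᵢ ∈ 2Λ`, i.e. `y` is a codeword.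
-/

open Finset Module

section Frame

variable {R M ι : Type*} [CommRing R] [AddCommGroup M] [Module R M] [Fintype ι]
  {B : M →ₗ[R] M →ₗ[R] R}

theorem linearIndependent_of_pairwise_orthogonal [NoZeroDivisors R] {v : ι → M}
    (hortho : Pairwise fun i j => B (v i) (v j) = 0) (hdiag : ∀ i, B (v i) (v i) ≠ 0) :
    LinearIndependent R v := by
  refine Fintype.linearIndependent_iff.mpr fun g hg j => ?_
  have hsum : ∑ i, g i * B (v i) (v j) = g j * B (v j) (v j) :=
    Fintype.sum_eq_single j fun i hij => by rw [hortho hij, mul_zero]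
  have hzero : ∑ i, g i * B (v i) (v j) = 0 := by
    simpa [map_sum, LinearMap.sum_apply] using congrArg (fun w => B w (v j)) hg
  exact (mul_eq_zero.mp (hsum ▸ hzero)).resolve_right (hdiag j)

variable [DecidableEq ι]

def IsFrame (B : M →ₗ[R] M →ₗ[R] R) (m : R) (x : ι → M) : Prop :=
  ∀ i j, B (x i) (x j) = if i = j then m else 0

variable {m : R} {x : ι → M}

theorem IsFrame.apply_sum_smul (hx : IsFrame B m x) (d e : ι → R) :
    B (∑ i, d i • x i) (∑ i, e i • x i) = m * ∑ i, d i * e i := by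
  unfold IsFrame at hx
  simp [map_sum, LinearMap.sum_apply, hx, Finset.mul_sum, mul_comm, mul_left_comm]

theorem IsFrame.eq_zero_of_forall_apply_eq_zero [NoZeroDivisors R] [StrongRankCondition R]
    [Module.Finite R M] (hx : IsFrame B m x) (hm : m ≠ 0) (hcard : Fintype.card ι = finrank R M)
    (hsymm : ∀ a b, B a b = B b a) (hB : ∀ a, a ≠ 0 → B a a ≠ 0) {v : M}
    (hv : ∀ i, B v (x i) = 0) : v = 0 := by
  by_contra hv0
  have hli : LinearIndependent R (fun o : Option ι => o.elim v x) := by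
    refine linearIndependent_of_pairwise_orthogonal (B := B) ?_ ?_
    · rintro (_ | i) (_ | j) hij
      · exact absurd rfl hij
      · exact hv j
      · exact (hsymm _ _).trans (hv i)
      · exact (hx i j).trans (if_neg fun h => hij (congrArg some h))
    · rintro (_ | i)
      · exact hB v hv0
      · simpa [hx i i] using hm
  simpa [hcard] using hli.fintype_card_le_finrank

theorem IsFrame.sum_apply_smul [NoZeroDivisors R] [StrongRankCondition R] [Module.Finite R M]
    (hx : IsFrame B m x) (hm : m ≠ 0) (hcard : Fintype.card ι = finrank R M)
    (hsymm : ∀ a b, B a b = B b a) (hB : ∀ a, a ≠ 0 → B a a ≠ 0) (l : M) :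
    ∑ i, B l (x i) • x i = m • l := by
  refine sub_eq_zero.mp (hx.eq_zero_of_forall_apply_eq_zero hm hcard hsymm hB fun j => ?_)
  unfold IsFrame at hx
  simp [map_sum, LinearMap.sum_apply, hx, hsymm l (x j), mul_comm]

end Frame

theorem Int.sq_modEq_four_ite_odd (d : ℤ) : d ^ 2 ≡ if Odd d then 1 else 0 [ZMOD 4] := by
  split_ifs with hd
  · exact Int.sq_mod_four_eq_one_of_odd hd
  · obtain ⟨t, rfl⟩ := Int.not_odd_iff_even.mp hd
    exact Int.modEq_zero_iff_dvd.mpr ⟨t ^ 2, by ring⟩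

theorem card_filter_odd_modEq_sum_sq {ι : Type*} [Fintype ι] (d : ι → ℤ) :
    (#{i | Odd (d i)} : ℤ) ≡ ∑ i, d i ^ 2 [ZMOD 4] := by
  rw [Finset.natCast_card_filter]
  exact (Int.ModEq.sum fun i _ => Int.sq_modEq_four_ite_odd (d i)).symm

section FrameCode

variable {Λ ι : Type*} [AddCommGroup Λ] [Fintype ι] [DecidableEq ι]
  {B : Λ →ₗ[ℤ] Λ →ₗ[ℤ] ℤ} {k : ℤ} {x : ι → Λ}

def frameCode (x : ι → Λ) : Set (ι → ZMod 2) :=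
  {a | ∃ d : ι → ℤ, (∀ i, (d i : ZMod 2) = a i) ∧ ∃ l : Λ, (2 : ℤ) • l = ∑ i, d i • x i}

theorem IsFrame.two_mul_apply_of_two_smul_eq (hx : IsFrame B (2 * k) x) {l μ : Λ} {d e : ι → ℤ}
    (hl : (2 : ℤ) • l = ∑ i, d i • x i) (hμ : (2 : ℤ) • μ = ∑ i, e i • x i) :
    2 * B l μ = k * ∑ i, d i * e i := by
  have h := hx.apply_sum_smul d e
  rw [← hl, ← hμ] at h
  simp only [map_zsmul, LinearMap.smul_apply, smul_eq_mul] at h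
  linarith

theorem IsFrame.sum_mul_eq_zero_of_mem_frameCode (hx : IsFrame B (2 * k) x) (hk : Odd k)
    {a b : ι → ZMod 2} (ha : a ∈ frameCode x) (hb : b ∈ frameCode x) : ∑ i, a i * b i = 0 := by
  obtain ⟨d, hd, l, hl⟩ := ha
  obtain ⟨e, he, μ, hμ⟩ := hb
  have h2 : (2 : ℤ) ∣ ∑ i, d i * e i :=
    (Int.isCoprime_two_left.mpr hk).dvd_of_dvd_mul_left
      ⟨B l μ, (hx.two_mul_apply_of_two_smul_eq hl hμ).symm⟩
  simp only [← hd, ← he]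
  exact_mod_cast (ZMod.intCast_zmod_eq_zero_iff_dvd _ 2).mpr h2

theorem IsFrame.four_dvd_card_of_mem_frameCode (hx : IsFrame B (2 * k) x) (hk : Odd k)
    (heven : ∀ a, Even (B a a)) {c : ι → ZMod 2} (hc : c ∈ frameCode x) :
    4 ∣ #{i | c i ≠ 0} := by
  obtain ⟨d, hd, l, hl⟩ := hc
  obtain ⟨n, hn⟩ := heven l
  have h4 : (4 : ℤ) ∣ ∑ i, d i * d i :=
    ((Int.isCoprime_two_left.mpr hk).pow_left (m := 2)).dvd_of_dvd_mul_left
      ⟨n, by linarith [hx.two_mul_apply_of_two_smul_eq hl hl]⟩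
  simp only [← hd, ne_eq, ZMod.intCast_eq_zero_iff_even, Int.not_even_iff_odd]
  have hcard := (card_filter_odd_modEq_sum_sq d).trans
    (Int.modEq_zero_iff_dvd.mpr (by simpa only [sq] using h4))
  exact_mod_cast Int.modEq_zero_iff_dvd.mp hcard

theorem exists_two_smul_eq_of_forall_two_dvd (hB : Function.Bijective fun a : Λ => B a) {v : Λ}
    (hv : ∀ l, 2 ∣ B v l) : ∃ μ : Λ, (2 : ℤ) • μ = v := by
  let half : Λ →ₗ[ℤ] ℤ :=
    { toFun := fun l => B v l / 2
      map_add' := fun a b => by simp [Int.add_ediv_of_dvd_left (hv a)]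
      map_smul' := fun n a => by simp [Int.mul_ediv_assoc _ (hv a)] }
  obtain ⟨μ, hμ⟩ := hB.2 half
  refine ⟨μ, hB.1 (LinearMap.ext fun l => ?_)⟩
  simp [hμ, half, Int.mul_ediv_cancel' (hv l)]

variable [Module.Finite ℤ Λ]

theorem IsFrame.apply_mem_frameCode (hx : IsFrame B (2 * k) x) (hk : k ≠ 0)
    (hcard : Fintype.card ι = finrank ℤ Λ) (hsymm : ∀ a b, B a b = B b a)
    (hB : ∀ a, a ≠ 0 → B a a ≠ 0) (l : Λ) :
    (fun i => (B l (x i) : ZMod 2)) ∈ frameCode x := by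
  refine ⟨fun i => B l (x i), fun _ => rfl, k • l, ?_⟩
  rw [hx.sum_apply_smul (mul_ne_zero two_ne_zero hk) hcard hsymm hB, smul_smul]

theorem IsFrame.mem_frameCode_of_forall_sum_mul_eq_zero (hx : IsFrame B (2 * k) x) (hk : k ≠ 0)
    (hcard : Fintype.card ι = finrank ℤ Λ) (hsymm : ∀ a b, B a b = B b a)
    (hB : ∀ a, a ≠ 0 → B a a ≠ 0) (hunimod : Function.Bijective fun a : Λ => B a) {y : ι → ZMod 2}
    (hy : ∀ c ∈ frameCode x, ∑ i, y i * c i = 0) : y ∈ frameCode x := by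
  let e : ι → ℤ := fun i => (y i).val
  have he : ∀ i, (e i : ZMod 2) = y i := fun i => by simp [e]
  obtain ⟨μ, hμ⟩ := exists_two_smul_eq_of_forall_two_dvd hunimod (v := ∑ i, e i • x i) fun l => by
    refine (ZMod.intCast_zmod_eq_zero_iff_dvd _ 2).mp ?_
    simpa [map_sum, LinearMap.sum_apply, he, hsymm (x _) l] using
      hy _ (hx.apply_mem_frameCode hk hcard hsymm hB l)
  exact ⟨e, he, μ, hμ⟩

end FrameCode

theorem frame_binary_code_typeII_general (k : ℕ) (hodd : Odd k)
    (Λ : Type) [AddCommGroup Λ] [Module ℤ Λ]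
    (hfree : Module.Free ℤ Λ) (hrank : Module.finrank ℤ Λ = 24)
    (B : Λ →ₗ[ℤ] Λ →ₗ[ℤ] ℤ)
    (hsymm : ∀ a b : Λ, B a b = B b a)
    (hpos : ∀ a : Λ, a ≠ 0 → 0 < B a a)
    (heven : ∀ a : Λ, Even (B a a))
    (hunimod : Function.Bijective fun a : Λ => B a)
    (x : Fin 24 → Λ)
    (hframe : ∀ i j, B (x i) (x j) = if i = j then (2 * (k : ℤ)) else 0)
    (C2 : Submodule (ZMod 2) (Fin 24 → ZMod 2))
    (hC2 : (C2 : Set (Fin 24 → ZMod 2)) =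
      {a | ∃ d : Fin 24 → ℤ, (∀ i, ((d i : ZMod 2)) = a i) ∧
            ∃ l : Λ, (2 : ℤ) • l = ∑ i, d i • x i}) :
    -- `C₂` is self-dual
    (C2 : Set (Fin 24 → ZMod 2)) = {y | ∀ c ∈ C2, ∑ i, y i * c i = 0} ∧
    -- the Hamming weight of every codeword of `C₂` is divisible by 4
    (∀ c ∈ C2, 4 ∣ (Finset.univ.filter fun i => c i ≠ 0).card) := by
  -- The `•` in `hC2` is the `zsmul` of the group, not the given module structure.
  obtain rfl : ‹Module ℤ Λ› = AddCommGroup.toIntModule Λ := Subsingleton.elim _ _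
  have : Module.Finite ℤ Λ := Module.finite_of_finrank_pos (by rw [hrank]; norm_num)
  have hx : IsFrame B (2 * (k : ℤ)) x := hframe
  have hk : Odd (k : ℤ) := (Int.odd_coe_nat k).mpr hodd
  have hcard : Fintype.card (Fin 24) = finrank ℤ Λ := by rw [hrank, Fintype.card_fin]
  have hB : ∀ a, a ≠ 0 → B a a ≠ 0 := fun a ha => (hpos a ha).ne'
  have hmem : ∀ c, c ∈ C2 ↔ c ∈ frameCode x := fun c => by rw [← SetLike.mem_coe, hC2]; rfl
  refine ⟨Set.ext fun y => ?_,
    fun c hc => hx.four_dvd_card_of_mem_frameCode hk heven ((hmem c).mp hc)⟩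
  simp only [SetLike.mem_coe, Set.mem_ofPred_eq, hmem]
  exact ⟨fun hy c hc => hx.sum_mul_eq_zero_of_mem_frameCode hk hy hc,
    hx.mem_frameCode_of_forall_sum_mul_eq_zero (mod_cast hodd.pos.ne') hcard hsymm hB hunimod⟩

/-- Let `k` be an odd positive integer, `Λ` a positive-definite even unimodular lattice of
rank 24 without roots, and `x₁, …, x₂₄` a `2k`-frame of `Λ`.  Then the binary code
`C₂ = {(d₁ mod 2, …, d₂₄ mod 2) : d ∈ ℤ²⁴, (1/2)·∑ᵢ dᵢ xᵢ ∈ Λ}` is a Type II binary code: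
it is self-dual and the Hamming weight of each of its codewords is divisible by 4. -/
theorem frame_binary_code_typeII (k : ℕ) (hk : 0 < k) (hodd : Odd k)
    (Λ : Type) [AddCommGroup Λ] [Module ℤ Λ]
    (hfree : Module.Free ℤ Λ) (hrank : Module.finrank ℤ Λ = 24)
    (B : Λ →ₗ[ℤ] Λ →ₗ[ℤ] ℤ)
    (hsymm : ∀ a b : Λ, B a b = B b a)
    (hpos : ∀ a : Λ, a ≠ 0 → 0 < B a a)
    (heven : ∀ a : Λ, Even (B a a))
    (hunimod : Function.Bijective fun a : Λ => B a)
    (hnoroots : ∀ a : Λ, B a a ≠ 2)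
    (x : Fin 24 → Λ)
    (hframe : ∀ i j, B (x i) (x j) = if i = j then (2 * (k : ℤ)) else 0)
    (C2 : Submodule (ZMod 2) (Fin 24 → ZMod 2))
    (hC2 : (C2 : Set (Fin 24 → ZMod 2)) =
      {a | ∃ d : Fin 24 → ℤ, (∀ i, ((d i : ZMod 2)) = a i) ∧
            ∃ l : Λ, (2 : ℤ) • l = ∑ i, d i • x i}) :
    -- `C₂` is self-dual
    (C2 : Set (Fin 24 → ZMod 2)) = {y | ∀ c ∈ C2, ∑ i, y i * c i = 0} ∧
    -- the Hamming weight of every codeword of `C₂` is divisible by 4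
    (∀ c ∈ C2, 4 ∣ (Finset.univ.filter fun i => c i ≠ 0).card) :=
  frame_binary_code_typeII_general k hodd Λ hfree hrank B hsymm hpos heven hunimod x hframe C2 hC2
end

section
/- Let G be a finite group whose center Z(G) = {1, z} has order 2, and suppose the quotient group G/Z(G) is an elementary abelian 2-group of cardinality 2^{2n} for a positive integer n. Then, up to isomorphism, there is exactly one irreducible complex representation T of G on which z acts as the scalar −1 (i.e., T(z) = −id), and its dimension is 2^n. -/
/-!
If `z` acts by `-1` then `χ(gz) = -χ(g)`; since every non-central `g` is conjugate to `gz`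
(commutators lie in the centre `{1, z}`), `χ` vanishes off the centre. Hence for two such
representations `⟨χ_V, χ_W⟩ = 2 dim V dim W / |G|`. Orthonormality of irreducible characters then
forces `2 (dim T)² = |G| = 2 ^ (2n+1)` for every irreducible `T` with `T(z) = -1` and makes any
two of them isomorphic; one exists inside the `(-1)`-eigenspace of `z` in the regular
representation.
-/

open CategoryTheory Limits Subgroup
open scoped commutatorElement

universe u

section CenterEqPair

variable {G : Type*} [Group G] {z : G}

lemma mem_center_of_center_eq_pair (hZ : (center G : Set G) = {1, z}) : z ∈ center G := by
  simp [← SetLike.mem_coe, hZ]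

lemma mul_self_eq_one_of_center_eq_pair (hZ : (center G : Set G) = {1, z}) : z * z = 1 := by
  have hinv : z⁻¹ ∈ (center G : Set G) := inv_mem (mem_center_of_center_eq_pair hZ)
  rw [hZ] at hinv
  rcases hinv with h | h
  · simp [inv_eq_one.1 h]
  · exact mul_eq_one_iff_eq_inv.2 h.symm

lemma card_center_of_center_eq_pair (hz : z ≠ 1) (hZ : (center G : Set G) = {1, z}) :
    Nat.card (center G) = 2 := by
  change Nat.card (center G : Set G) = 2
  rw [Nat.card_congr (Equiv.setCongr hZ), Nat.card_coe_set_eq, Set.ncard_pair hz.symm]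

lemma exists_conj_eq_mul_of_center_eq_pair (hZ : (center G : Set G) = {1, z})
    (hcomm : ∀ a b : G ⧸ center G, Commute a b) {g : G} (hg : g ∉ center G) :
    ∃ x : G, x * g * x⁻¹ = g * z := by
  obtain ⟨x, hx⟩ : ∃ x, x * g ≠ g * x := by simpa [mem_center_iff] using hg
  have hmem : ⁅x, g⁆ ∈ (center G : Set G) := by
    rw [SetLike.mem_coe, ← QuotientGroup.eq_one_iff, commutatorElement_def]
    simp only [QuotientGroup.mk_mul, QuotientGroup.mk_inv, (hcomm x g).eq]
    group
  rw [hZ] at hmem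
  rcases hmem with h | h
  · exact absurd (commutatorElement_eq_one_iff_mul_comm.1 h) hx
  · refine ⟨x, ?_⟩
    rw [Set.mem_singleton_iff, commutatorElement_def, mul_inv_eq_iff_eq_mul] at h
    rw [h, (mem_center_iff.1 (mem_center_of_center_eq_pair hZ) g)]

end CenterEqPair

namespace Representation

variable {k G V : Type*} [CommRing k] [Group G] [AddCommGroup V] [Module k V]

def eigenSubrepresentation (ρ : Representation k G V) {z : G} (hz : z ∈ center G) (c : k) :
    Subrepresentation ρ where
  toSubmodule := Module.End.eigenspace (ρ z) c
  apply_mem_toSubmodule g v hv := by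
    rw [Module.End.mem_eigenspace_iff] at hv ⊢
    rw [← Module.End.mul_apply, ← map_mul, ← mem_center_iff.1 hz g, map_mul,
      Module.End.mul_apply, hv, map_smul]

lemma eigenSubrepresentation_apply (ρ : Representation k G V) {z : G} (hz : z ∈ center G)
    (c : k) : (ρ.eigenSubrepresentation hz c).toRepresentation z = c • 1 := by
  ext ⟨v, hv⟩
  exact Module.End.mem_eigenspace_iff.1 hv

lemma single_one_sub_single_mem_eigenspace_ofMulAction {z : G} (hzz : z * z = 1) :
    MonoidAlgebra.single 1 1 - MonoidAlgebra.single z 1 ∈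
      Module.End.eigenspace (ofMulAction k G G z) (-1) := by
  rw [Module.End.mem_eigenspace_iff, map_sub, ofMulAction_single, ofMulAction_single,
    smul_eq_mul, smul_eq_mul, hzz, mul_one, neg_one_smul, neg_sub]

end Representation

namespace FDRep

section Monoid

variable {k G : Type*} [Field k] [Monoid G]

lemma injective_of_mono {X Y : FDRep k G} (f : X ⟶ Y) [Mono f] : Function.Injective f :=
  (Rep.mono_iff_injective ((forget₂ (FDRep k G) (Rep k G)).map f)).1 inferInstance

lemma isZero_iff_subsingleton (X : FDRep k G) : IsZero X ↔ Subsingleton X := by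
  refine ⟨fun h ↦ (Rep.isZero_iff k G _).1 ((forget₂ (FDRep k G) (Rep k G)).map_isZero h),
    fun _ ↦ ?_⟩
  rw [IsZero.iff_id_eq_zero]
  ext v
  exact Subsingleton.elim _ _

lemma finrank_strictMono_subobject (X : FDRep k G) :
    StrictMono fun P : Subobject X ↦ Module.finrank k (P : FDRep k G) := by
  intro P Q hPQ
  let ι := Subobject.ofLE P Q hPQ.le
  have hinj := injective_of_mono ι
  refine (LinearMap.finrank_le_finrank_of_injective (f := ι.hom.hom.hom) hinj).lt_of_ne
    fun hdim ↦ hPQ.ne ?_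
  have : IsIso ι := (ConcreteCategory.isIso_iff_bijective ι).2
    ⟨hinj, (LinearMap.injective_iff_surjective_of_finrank_eq_finrank hdim).1 hinj⟩
  exact Subobject.eq_of_comm (asIso ι) (Subobject.ofLE_arrow _)

instance (X : FDRep k G) : IsArtinianObject X :=
  isArtinianObject.is_of_prop (finrank_strictMono_subobject X).wellFoundedLT

lemma ρ_eq_smul_one_of_mono {X Y : FDRep k G} (f : X ⟶ Y) [Mono f] {g : G} {c : k}
    (hY : Y.ρ g = c • 1) : X.ρ g = c • 1 := by
  ext v
  apply injective_of_mono f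
  have hf := LinearMap.congr_fun (congrArg (fun φ ↦ φ.hom.hom) (f.comm g)) v
  change f (X.ρ g v) = Y.ρ g (f v) at hf
  rw [hf, hY]
  exact (map_smul f.hom.hom.hom c v).symm

end Monoid

section Group

variable {k G : Type u} [Field k] [Group G] {z : G}

lemma exists_simple_ρ_eq_neg_one [Finite G] (hz : z ∈ center G) (hz1 : z ≠ 1)
    (hzz : z * z = 1) : ∃ T : FDRep k G, Simple T ∧ T.ρ z = -1 := by
  let E : FDRep k G :=
    FDRep.of ((Representation.ofMulAction k G G).eigenSubrepresentation hz (-1)).toRepresentation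
  have hEz : E.ρ z = (-1 : k) • 1 := by
    rw [of_ρ', Representation.eigenSubrepresentation_apply]
  have hE : ¬IsZero E := by
    rw [isZero_iff_subsingleton, not_subsingleton_iff_nontrivial]
    change Nontrivial (Module.End.eigenspace (Representation.ofMulAction k G G z) (-1))
    refine Submodule.nontrivial_iff_ne_bot.2 <| (Submodule.ne_bot_iff _).2
      ⟨_, Representation.single_one_sub_single_mem_eigenspace_ofMulAction hzz, ?_⟩
    intro h
    rw [sub_eq_zero] at h
    simpa [hz1.symm] using congrArg (fun f ↦ MonoidAlgebra.coeff f 1) h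
  obtain ⟨T, hT⟩ := exists_simple_subobject hE
  exact ⟨T, hT, by rw [ρ_eq_smul_one_of_mono T.arrow hEz, neg_one_smul]⟩

variable {V W : FDRep k G}

lemma character_mul_of_ρ_eq_neg_one (hV : V.ρ z = -1) (g : G) :
    V.character (g * z) = -V.character g := by
  simp [character, hV]

lemma character_eq_neg_finrank (hV : V.ρ z = -1) :
    V.character z = -Module.finrank k V := by
  simpa using character_mul_of_ρ_eq_neg_one hV 1

lemma character_eq_zero_of_conj_eq_mul [CharZero k] (hV : V.ρ z = -1) {g x : G}
    (hx : x * g * x⁻¹ = g * z) : V.character g = 0 := by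
  have h := char_conj V g x
  rw [hx, character_mul_of_ρ_eq_neg_one hV] at h
  exact self_eq_neg.1 h.symm

lemma sum_character_mul_character_inv [Fintype G] [CharZero k]
    (hZ : (center G : Set G) = {1, z}) (hz1 : z ≠ 1) (hcomm : ∀ a b : G ⧸ center G, Commute a b)
    (hV : V.ρ z = -1) (hW : W.ρ z = -1) :
    ∑ g, V.character g * W.character g⁻¹ = 2 * Module.finrank k V * Module.finrank k W := by
  classical
  have hvanish : ∀ g ∈ Finset.univ, g ∉ ({1, z} : Finset G) →
      V.character g * W.character g⁻¹ = 0 := by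
    intro g _ hg
    have hg : g ∉ center G := by simpa [← SetLike.mem_coe, hZ] using hg
    obtain ⟨x, hx⟩ := exists_conj_eq_mul_of_center_eq_pair hZ hcomm hg
    rw [character_eq_zero_of_conj_eq_mul hV hx, zero_mul]
  rw [← Finset.sum_subset (Finset.subset_univ _) hvanish, Finset.sum_pair hz1.symm, inv_one,
    inv_eq_of_mul_eq_one_right (mul_self_eq_one_of_center_eq_pair hZ), char_one, char_one,
    character_eq_neg_finrank hV, character_eq_neg_finrank hW]
  ring

variable [Fintype G] [IsAlgClosed k] [CharZero k]

open scoped Classical in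
lemma two_mul_finrank_mul_finrank_eq [Simple V] [Simple W] (hZ : (center G : Set G) = {1, z})
    (hz1 : z ≠ 1) (hcomm : ∀ a b : G ⧸ center G, Commute a b) (hV : V.ρ z = -1)
    (hW : W.ρ z = -1) :
    (2 * Module.finrank k V * Module.finrank k W : k) =
      if Nonempty (V ≅ W) then (Nat.card G : k) else 0 := by
  have hcard : (Nat.card G : k) ≠ 0 := Nat.cast_ne_zero.2 Nat.card_pos.ne'
  have := invertibleOfNonzero hcard
  have h := char_orthonormal V W
  rw [sum_character_mul_character_inv hZ hz1 hcomm hV hW, inv_mul_eq_iff_eq_mul₀ hcard] at h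
  split_ifs at h ⊢ <;> simpa using h

lemma two_mul_finrank_sq_eq_card [Simple V] (hZ : (center G : Set G) = {1, z}) (hz1 : z ≠ 1)
    (hcomm : ∀ a b : G ⧸ center G, Commute a b) (hV : V.ρ z = -1) :
    2 * Module.finrank k V ^ 2 = Nat.card G := by
  have h := two_mul_finrank_mul_finrank_eq hZ hz1 hcomm hV hV
  rw [if_pos ⟨Iso.refl V⟩, mul_assoc, ← sq] at h
  exact_mod_cast h

lemma nonempty_iso_of_ρ_eq_neg_one [Simple V] [Simple W] (hZ : (center G : Set G) = {1, z})
    (hz1 : z ≠ 1) (hcomm : ∀ a b : G ⧸ center G, Commute a b) (hV : V.ρ z = -1)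
    (hW : W.ρ z = -1) : Nonempty (V ≅ W) := by
  have hdim : Module.finrank k V = Module.finrank k W := by
    have := (two_mul_finrank_sq_eq_card hZ hz1 hcomm hV).trans
      (two_mul_finrank_sq_eq_card hZ hz1 hcomm hW).symm
    exact Nat.pow_left_injective two_ne_zero (Nat.eq_of_mul_eq_mul_left two_pos this)
  by_contra hVW
  have h := two_mul_finrank_mul_finrank_eq hZ hz1 hcomm hV hW
  rw [if_neg hVW, hdim, mul_assoc, ← sq] at h
  have h : 2 * Module.finrank k W ^ 2 = 0 := by exact_mod_cast h
  rw [two_mul_finrank_sq_eq_card hZ hz1 hcomm hW] at h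
  exact Nat.card_pos.ne' h

end Group

end FDRep

theorem unique_irrep_center_acts_by_neg_one_general (n : ℕ)
    (G : Type) [Group G] [Finite G]
    (z : G) (hz : z ≠ 1)
    (hZ : (Subgroup.center G : Set G) = {1, z})
    (helem : ∀ g : G ⧸ Subgroup.center G, g ^ 2 = 1)
    (hcard : Nat.card (G ⧸ Subgroup.center G) = 2 ^ (2 * n)) :
    ∃ T : FDRep ℂ G, Simple T ∧ T.ρ z = -1 ∧
      Module.finrank ℂ T = 2 ^ n ∧
      ∀ T' : FDRep ℂ G, Simple T' → T'.ρ z = -1 → Nonempty (T ≅ T') := by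
  have := Fintype.ofFinite G
  have hcomm : ∀ a b : G ⧸ center G, Commute a b :=
    Commute.of_orderOf_dvd_two fun g ↦ orderOf_dvd_of_pow_eq_one (helem g)
  have hcardG : Nat.card G = 2 * (2 ^ n) ^ 2 := by
    rw [card_eq_card_quotient_mul_card_subgroup (center G), hcard,
      card_center_of_center_eq_pair hz hZ]
    ring
  obtain ⟨T, hT, hTz⟩ := FDRep.exists_simple_ρ_eq_neg_one (k := ℂ)
    (mem_center_of_center_eq_pair hZ) hz (mul_self_eq_one_of_center_eq_pair hZ)
  refine ⟨T, hT, hTz, ?_, fun T' _ hT'z ↦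
    FDRep.nonempty_iso_of_ρ_eq_neg_one hZ hz hcomm hTz hT'z⟩
  have hsq := FDRep.two_mul_finrank_sq_eq_card hZ hz hcomm hTz
  rw [hcardG] at hsq
  exact Nat.pow_left_injective two_ne_zero (Nat.eq_of_mul_eq_mul_left two_pos hsq)

/-- Let `G` be a finite group whose center is `{1, z}` of order 2, and suppose `G/Z(G)`
is an elementary abelian 2-group of cardinality `2^(2n)` with `n ≥ 1`.  Then up to
isomorphism there is exactly one irreducible complex representation `T` of `G` on which
`z` acts as `-1`, and its dimension is `2^n`. -/
theorem unique_irrep_center_acts_by_neg_one (n : ℕ) (hn : 0 < n)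
    (G : Type) [Group G] [Finite G]
    (z : G) (hz : z ≠ 1)
    (hZ : (Subgroup.center G : Set G) = {1, z})
    (helem : ∀ g : G ⧸ Subgroup.center G, g ^ 2 = 1)
    (hcard : Nat.card (G ⧸ Subgroup.center G) = 2 ^ (2 * n)) :
    ∃ T : FDRep ℂ G, Simple T ∧ T.ρ z = -1 ∧
      Module.finrank ℂ T = 2 ^ n ∧
      ∀ T' : FDRep ℂ G, Simple T' → T'.ρ z = -1 → Nonempty (T ≅ T') :=
  unique_irrep_center_acts_by_neg_one_general n G z hz hZ helem hcard
end
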